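/- Let F be a field of characteristic 7 and let V be the F-vector space with basis m_0,...,m_6 with product m_i · m_j = c(i,j) m_{i+j-3} where now the indices are taken modulo 7 and c(i,j)=2(j-i)(4i+j-1)(4j+i-1). For each k define f_k(m_i) = (i+4k+4) m_{i+k} with indices modulo 7. Then the f_k satisfy [f_r, f_s] = (s-r) f_{r+s} (indices mod 7) and each f_k is a derivation of (V, ·). -/
import Mathlib


/-- The function `c(i,j) = 2(j-i)(4i+j-1)(4j+i-1)` on `F_7 = ZMod 7`. -/
def cfun (i j : ZMod 7) : ZMod 7 := 2 * (j - i) * (4 * i + j - 1) * (4 * j + i - 1)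

/-- The canonical embedding of `F_7` into a field of characteristic `7`. -/
def cst (F : Type*) [Field F] [CharP F 7] : ZMod 7 →+* F := ZMod.castHom dvd_rfl F

/-- The product on `V` with basis `m_i`, `i ∈ ZMod 7`, given by `m_i · m_j = c(i,j) m_{i+j-3}`,
all indices modulo 7. -/
def mulC (F : Type*) [Field F] [CharP F 7] (u v : ZMod 7 → F) : ZMod 7 → F := fun t =>
  ∑ i : ZMod 7, ∑ j : ZMod 7,
    if i + j - 3 = t then cst F (cfun i j) * u i * v j else 0

/-- The operator `f_k`, `k ∈ ZMod 7`, determined by `f_k(m_i) = (i+4k+4) m_{i+k}`,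
indices modulo 7. -/
def fOp (F : Type*) [Field F] [CharP F 7] (k : ZMod 7) (u : ZMod 7 → F) : ZMod 7 → F :=
  fun t => cst F ((t - k) + 4 * k + 4) * u (t - k)

lemma shift_sum {M : Type*} [AddCommMonoid M] (k : ZMod 7) (G : ZMod 7 → M) :
    ∑ i : ZMod 7, G i = ∑ i : ZMod 7, G (i + k) :=
  (Fintype.sum_equiv (Equiv.addRight k) _ _ (fun _ => rfl)).symm


/-- The cyclic operators `f_k` satisfy `[f_r, f_s] = (s-r) f_{r+s}` (indices mod 7) and each
`f_k` is a derivation of `(V, ·)`. -/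
theorem stmt6 (F : Type*) [Field F] [CharP F 7] :
    (∀ r s : ZMod 7, ∀ u : ZMod 7 → F,
        fOp F r (fOp F s u) - fOp F s (fOp F r u) = cst F (s - r) • fOp F (r + s) u) ∧
      ∀ k : ZMod 7, ∀ u v : ZMod 7 → F,
        fOp F k (mulC F u v) = mulC F (fOp F k u) v + mulC F u (fOp F k v) := by
  constructor
  · intro r s u
    funext t
    simp only [fOp, Pi.sub_apply, Pi.smul_apply, smul_eq_mul]
    have h1 : t - s - r = t - r - s := by ring
    have h2 : t - (r + s) = t - r - s := by ring
    rw [h1, h2]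
    simp only [map_add, map_sub, map_mul]
    ring
  · intro k u v
    funext t
    have key : ∀ i j : ZMod 7, (i + j - 3 + 4 * k + 4) * cfun i j
        = cfun (i + k) j * (i + 4 * k + 4) + cfun i (j + k) * (j + 4 * k + 4) := by
      revert k; decide
    have hcond1 : ∀ i j : ZMod 7, (i + k + j - 3 = t) = (i + j - 3 = t - k) := by
      intro i j
      simp only [eq_iff_iff, eq_sub_iff_add_eq]
      constructor <;> intro h <;> linear_combination h
    have hcond2 : ∀ i j : ZMod 7, (i + (j + k) - 3 = t) = (i + j - 3 = t - k) := by
      intro i j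
      simp only [eq_iff_iff, eq_sub_iff_add_eq]
      constructor <;> intro h <;> linear_combination h
    simp only [fOp, mulC, Pi.add_apply]
    have hA : (∑ i : ZMod 7, ∑ j : ZMod 7,
        if i + j - 3 = t then cst F (cfun i j) * (cst F (i - k + 4 * k + 4) * u (i - k)) * v j else 0)
        = ∑ i : ZMod 7, ∑ j : ZMod 7,
          if i + j - 3 = t - k then cst F (cfun (i + k) j) * (cst F (i + 4 * k + 4) * u i) * v j else 0 := by
      rw [shift_sum k (fun i => ∑ j : ZMod 7,
        if i + j - 3 = t then cst F (cfun i j) * (cst F (i - k + 4 * k + 4) * u (i - k)) * v j else 0)]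
      simp only [add_sub_cancel_right, hcond1]
    have hB : (∑ i : ZMod 7, ∑ j : ZMod 7,
        if i + j - 3 = t then cst F (cfun i j) * u i * (cst F (j - k + 4 * k + 4) * v (j - k)) else 0)
        = ∑ i : ZMod 7, ∑ j : ZMod 7,
          if i + j - 3 = t - k then cst F (cfun i (j + k)) * u i * (cst F (j + 4 * k + 4) * v j) else 0 := by
      rw [Finset.sum_comm]
      rw [shift_sum k (fun j => ∑ i : ZMod 7,
        if i + j - 3 = t then cst F (cfun i j) * u i * (cst F (j - k + 4 * k + 4) * v (j - k)) else 0)]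
      rw [Finset.sum_comm]
      simp only [add_sub_cancel_right, hcond2]
    rw [hA, hB]
    simp only [Finset.mul_sum, mul_ite, mul_zero, ← Finset.sum_add_distrib]
    refine Finset.sum_congr rfl fun i _ => Finset.sum_congr rfl fun j _ => ?_
    split_ifs with h
    · rw [← h]
      have e := congrArg (cst F) (key i j)
      simp only [map_add, map_sub, map_mul] at e ⊢
      linear_combination u i * v j * e
    · simp
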